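/- arXiv:2105.05026 — 2 statements merged into one kernel-verified Lean document; each statement's English description precedes it below -/
import Mathlib

section
/- Let c ≥ 1, let β⁺, β⁻: {−1,+1}^c → (0,∞) be positive penalty functions, and let P be any probability distribution on {−1,+1}^c. Consider the conditional surrogate risk f ↦ Σ_{y∈{−1,+1}^c} P(y)·L_u(f,y) with base loss ℓ(z) = (max{0, 1−z})². Then the point f* ∈ ℝ^c with f*_j = (φ_j^+(P) − φ_j^-(P))/(φ_j^+(P) + φ_j^-(P)) is a global minimizer, with minimum value Σ_{j=1}^c 4·φ_j^+(P)·φ_j^-(P)/(φ_j^+(P) + φ_j^-(P)); moreover, if φ_j^+(P) > 0 and φ_j^-(P) > 0 for every j, then f* is the unique global minimizer. -/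
open scoped BigOperators

/-- The sign value of a Boolean label: `true ↦ +1`, `false ↦ -1`. -/
def toSign (b : Bool) : ℝ := if b then 1 else -1

/-- The general reweighted univariate surrogate loss `L_u`. -/
noncomputable def Lu {c : ℕ} (βp βm : (Fin c → Bool) → ℝ) (ℓ : ℝ → ℝ)
    (v : Fin c → ℝ) (y : Fin c → Bool) : ℝ :=
  ∑ j, (if y j then βp y else βm y) * ℓ (toSign (y j) * v j)

/-- The conditional surrogate risk. -/
noncomputable def risk {c : ℕ} (βp βm : (Fin c → Bool) → ℝ) (ℓ : ℝ → ℝ)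
    (P : (Fin c → Bool) → ℝ) (f : Fin c → ℝ) : ℝ :=
  ∑ y, P y * Lu βp βm ℓ f y

/-- `φ_j^+(P)`. -/
def phiP {c : ℕ} (β P : (Fin c → Bool) → ℝ) (j : Fin c) : ℝ :=
  ∑ y ∈ Finset.univ.filter (fun y : Fin c → Bool => y j = true), β y * P y

/-- `φ_j^-(P)`. -/
def phiM {c : ℕ} (β P : (Fin c → Bool) → ℝ) (j : Fin c) : ℝ :=
  ∑ y ∈ Finset.univ.filter (fun y : Fin c → Bool => y j = false), β y * P y

/-!
The risk splits over coordinates into `a ℓ(t) + b ℓ(-t)` with `a = φ_j^+`, `b = φ_j^-`. With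
`u = (1 - t)₊` and `v = (1 + t)₊` one has `u + v ≥ 2` and
`(a + b)(a u² + b v²) = a b (u + v)² + (a u - b v)² ≥ 4 a b`; for `a, b > 0` equality forces
`u = 1 - t`, `v = 1 + t` and `a u = b v`, that is `t = (a - b) / (a + b)`.
-/

def sqHingePairRisk (a b t : ℝ) : ℝ :=
  a * (max 0 (1 - t)) ^ 2 + b * (max 0 (1 + t)) ^ 2

section Coordinate

variable {c : ℕ}

lemma sum_eq_sum_coord_true_add_sum_coord_false (g : (Fin c → Bool) → Bool → ℝ) (j : Fin c) :
    ∑ y, g y (y j) =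
      ∑ y with y j = true, g y true + ∑ y with y j = false, g y false := by
  rw [← Finset.sum_filter_add_sum_filter_not Finset.univ (fun y => y j = true)]
  simp only [Bool.not_eq_true]
  congr 1 <;> refine Finset.sum_congr rfl fun y hy => ?_ <;>
    rw [(Finset.mem_filter.mp hy).2]

lemma risk_eq_sum_phi (βp βm : (Fin c → Bool) → ℝ) (ℓ : ℝ → ℝ) (P : (Fin c → Bool) → ℝ)
    (f : Fin c → ℝ) :
    risk βp βm ℓ P f = ∑ j, (phiP βp P j * ℓ (f j) + phiM βm P j * ℓ (-f j)) := by
  unfold risk Lu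
  simp_rw [Finset.mul_sum]
  rw [Finset.sum_comm]
  refine Finset.sum_congr rfl fun j _ => ?_
  rw [sum_eq_sum_coord_true_add_sum_coord_false
    (fun y b => P y * ((if b then βp y else βm y) * ℓ (toSign b * f j))) j,
    phiP, phiM, Finset.sum_mul, Finset.sum_mul]
  simp only [toSign, if_true, Bool.false_eq_true, if_false, one_mul, neg_one_mul]
  congr 1 <;> exact Finset.sum_congr rfl fun y _ => by ring

lemma phiP_add_phiM (βp βm P : (Fin c → Bool) → ℝ) (j : Fin c) :
    phiP βp P j + phiM βm P j = ∑ y, (if y j then βp y else βm y) * P y :=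
  (sum_eq_sum_coord_true_add_sum_coord_false (fun y b => (if b then βp y else βm y) * P y) j).symm

lemma phiP_nonneg {β P : (Fin c → Bool) → ℝ} (hβ : ∀ y, 0 ≤ β y) (hP : ∀ y, 0 ≤ P y)
    (j : Fin c) : 0 ≤ phiP β P j :=
  Finset.sum_nonneg fun y _ => mul_nonneg (hβ y) (hP y)

lemma phiM_nonneg {β P : (Fin c → Bool) → ℝ} (hβ : ∀ y, 0 ≤ β y) (hP : ∀ y, 0 ≤ P y)
    (j : Fin c) : 0 ≤ phiM β P j :=
  Finset.sum_nonneg fun y _ => mul_nonneg (hβ y) (hP y)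

lemma phiP_add_phiM_pos {βp βm P : (Fin c → Bool) → ℝ} (hβp : ∀ y, 0 < βp y)
    (hβm : ∀ y, 0 < βm y) (hP : ∀ y, 0 ≤ P y) (hP0 : ∑ y, P y ≠ 0) (j : Fin c) :
    0 < phiP βp P j + phiM βm P j := by
  have hβ : ∀ y, 0 < if y j then βp y else βm y := fun y => by
    split
    exacts [hβp y, hβm y]
  obtain ⟨y₀, -, hy₀⟩ := Finset.exists_ne_zero_of_sum_ne_zero hP0
  rw [phiP_add_phiM]
  exact Finset.sum_pos' (fun y _ => mul_nonneg (hβ y).le (hP y))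
    ⟨y₀, Finset.mem_univ _, mul_pos (hβ y₀) ((hP y₀).lt_of_ne' hy₀)⟩

lemma risk_sqHinge_eq_sum (βp βm : (Fin c → Bool) → ℝ) (P : (Fin c → Bool) → ℝ)
    (f : Fin c → ℝ) :
    risk βp βm (fun z => (max 0 (1 - z)) ^ 2) P f =
      ∑ j, sqHingePairRisk (phiP βp P j) (phiM βm P j) (f j) := by
  simp only [risk_eq_sum_phi, sqHingePairRisk, sub_neg_eq_add]

end Coordinate

section PairRisk

variable {a b t : ℝ}

lemma add_mul_sqHingePairRisk :
    (a + b) * sqHingePairRisk a b t =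
      a * b * (max 0 (1 - t) + max 0 (1 + t)) ^ 2 +
        (a * max 0 (1 - t) - b * max 0 (1 + t)) ^ 2 := by
  unfold sqHingePairRisk; ring

lemma four_le_sq_max_add_max (t : ℝ) : 4 ≤ (max 0 (1 - t) + max 0 (1 + t)) ^ 2 := by
  have h : 2 ≤ max 0 (1 - t) + max 0 (1 + t) := by
    linarith [le_max_right 0 (1 - t), le_max_right 0 (1 + t)]
  nlinarith

lemma div_le_sqHingePairRisk (ha : 0 ≤ a) (hb : 0 ≤ b) (hab : 0 < a + b) :
    4 * a * b / (a + b) ≤ sqHingePairRisk a b t := by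
  rw [div_le_iff₀ hab, mul_comm _ (a + b), add_mul_sqHingePairRisk]
  nlinarith [mul_le_mul_of_nonneg_left (four_le_sq_max_add_max t) (mul_nonneg ha hb),
    sq_nonneg (a * max 0 (1 - t) - b * max 0 (1 + t))]

lemma sqHingePairRisk_sub_div_add (ha : 0 ≤ a) (hb : 0 ≤ b) (hab : 0 < a + b) :
    sqHingePairRisk a b ((a - b) / (a + b)) = 4 * a * b / (a + b) := by
  have h1 : 1 - (a - b) / (a + b) = 2 * b / (a + b) := by field_simp; ring
  have h2 : 1 + (a - b) / (a + b) = 2 * a / (a + b) := by field_simp; ring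
  rw [sqHingePairRisk, h1, h2, max_eq_right (by positivity), max_eq_right (by positivity)]
  field_simp
  ring

lemma eq_of_sqHingePairRisk_eq (ha : 0 < a) (hb : 0 < b)
    (h : sqHingePairRisk a b t = 4 * a * b / (a + b)) :
    t = (a - b) / (a + b) := by
  have hab : 0 < a + b := add_pos ha hb
  have hid := add_mul_sqHingePairRisk (a := a) (b := b) (t := t)
  rw [h, mul_div_cancel₀ _ hab.ne'] at hid
  set u := max 0 (1 - t)
  set v := max 0 (1 + t)
  have hu : 1 - t ≤ u := le_max_right _ _
  have hv : 1 + t ≤ v := le_max_right _ _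
  have h4 : a * b * 4 ≤ a * b * (u + v) ^ 2 :=
    mul_le_mul_of_nonneg_left (four_le_sq_max_add_max t) (mul_pos ha hb).le
  have hbal : a * u = b * v := by
    have : (a * u - b * v) ^ 2 = 0 := by nlinarith [sq_nonneg (a * u - b * v)]
    exact sub_eq_zero.mp (pow_eq_zero_iff two_ne_zero |>.mp this)
  have hsq : (u + v) ^ 2 = 4 := by
    refine mul_left_cancel₀ (mul_pos ha hb).ne' ?_
    nlinarith
  have hu_eq : u = 1 - t := by nlinarith
  have hv_eq : v = 1 + t := by nlinarith
  rw [hu_eq, hv_eq] at hbal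
  rw [eq_div_iff hab.ne']
  linarith

end PairRisk

theorem stmt11_general (c : ℕ)
    (βp βm : (Fin c → Bool) → ℝ) (hβp : ∀ y, 0 < βp y) (hβm : ∀ y, 0 < βm y)
    (P : (Fin c → Bool) → ℝ) (hP : ∀ y, 0 ≤ P y) (hP1 : (∑ y, P y) = 1)
    (fstar : Fin c → ℝ)
    (hfstar : ∀ j, fstar j = (phiP βp P j - phiM βm P j) / (phiP βp P j + phiM βm P j)) :
    (∀ f : Fin c → ℝ,
        risk βp βm (fun z => (max 0 (1 - z)) ^ 2) P fstar ≤
          risk βp βm (fun z => (max 0 (1 - z)) ^ 2) P f) ∧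
      risk βp βm (fun z => (max 0 (1 - z)) ^ 2) P fstar =
        (∑ j, 4 * phiP βp P j * phiM βm P j / (phiP βp P j + phiM βm P j)) ∧
      ((∀ j, 0 < phiP βp P j ∧ 0 < phiM βm P j) →
        ∀ f : Fin c → ℝ,
          (∀ g : Fin c → ℝ,
              risk βp βm (fun z => (max 0 (1 - z)) ^ 2) P f ≤
                risk βp βm (fun z => (max 0 (1 - z)) ^ 2) P g) →
            f = fstar) := by
  have ha := phiP_nonneg (fun y => (hβp y).le) hP
  have hb := phiM_nonneg (fun y => (hβm y).le) hP
  have hab := phiP_add_phiM_pos hβp hβm hP (by simp [hP1])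
  have hval : risk βp βm (fun z => (max 0 (1 - z)) ^ 2) P fstar =
      ∑ j, 4 * phiP βp P j * phiM βm P j / (phiP βp P j + phiM βm P j) := by
    rw [risk_sqHinge_eq_sum]
    exact Finset.sum_congr rfl fun j _ => by rw [hfstar, sqHingePairRisk_sub_div_add (ha j) (hb j) (hab j)]
  have hle : ∀ f : Fin c → ℝ, ∀ j,
      4 * phiP βp P j * phiM βm P j / (phiP βp P j + phiM βm P j) ≤
        sqHingePairRisk (phiP βp P j) (phiM βm P j) (f j) :=
    fun f j => div_le_sqHingePairRisk (ha j) (hb j) (hab j)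
  have hmin : ∀ f, risk βp βm (fun z => (max 0 (1 - z)) ^ 2) P fstar ≤
      risk βp βm (fun z => (max 0 (1 - z)) ^ 2) P f := fun f => by
    rw [hval, risk_sqHinge_eq_sum]
    exact Finset.sum_le_sum fun j _ => hle f j
  refine ⟨hmin, hval, fun hpos f hf => funext fun j => ?_⟩
  have heq := (hf fstar).antisymm (hmin f)
  rw [hval, risk_sqHinge_eq_sum] at heq
  rw [hfstar]
  exact eq_of_sqHingePairRisk_eq (hpos j).1 (hpos j).2
    ((Finset.sum_eq_sum_iff_of_le fun j _ => hle f j).mp heq.symm j (Finset.mem_univ j)).symm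

theorem stmt11 (c : ℕ) (hc : 1 ≤ c)
    (βp βm : (Fin c → Bool) → ℝ) (hβp : ∀ y, 0 < βp y) (hβm : ∀ y, 0 < βm y)
    (P : (Fin c → Bool) → ℝ) (hP : ∀ y, 0 ≤ P y) (hP1 : (∑ y, P y) = 1)
    (fstar : Fin c → ℝ)
    (hfstar : ∀ j, fstar j = (phiP βp P j - phiM βm P j) / (phiP βp P j + phiM βm P j)) :
    (∀ f : Fin c → ℝ,
        risk βp βm (fun z => (max 0 (1 - z)) ^ 2) P fstar ≤
          risk βp βm (fun z => (max 0 (1 - z)) ^ 2) P f) ∧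
      risk βp βm (fun z => (max 0 (1 - z)) ^ 2) P fstar =
        (∑ j, 4 * phiP βp P j * phiM βm P j / (phiP βp P j + phiM βm P j)) ∧
      ((∀ j, 0 < phiP βp P j ∧ 0 < phiM βm P j) →
        ∀ f : Fin c → ℝ,
          (∀ g : Fin c → ℝ,
              risk βp βm (fun z => (max 0 (1 - z)) ^ 2) P f ≤
                risk βp βm (fun z => (max 0 (1 - z)) ^ 2) P g) →
            f = fstar) :=
  stmt11_general c βp βm hβp hβm P hP hP1 fstar hfstar
end

section
/- For every c ≥ 2, every nontrivial y ∈ {−1,+1}^c and every s ∈ {−1,+1}^c: (1/(|S_y^+|·|S_y^-|)) Σ_{p∈S_y^+} Σ_{q∈S_y^-} 1[s_p ≤ s_q] ≤ (1/min{|S_y^+|,|S_y^-|}) Σ_{j=1}^c 1[s_j ≠ y_j]. -/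
open scoped Classical BigOperators

/-- The set of positive-label indices of `y ∈ {-1,+1}^c`. -/
noncomputable def Sp {c : ℕ} (y : Fin c → ℝ) : Finset (Fin c) :=
  Finset.univ.filter (fun j => y j = 1)

/-- The set of negative-label indices of `y ∈ {-1,+1}^c`. -/
noncomputable def Sm {c : ℕ} (y : Fin c → ℝ) : Finset (Fin c) :=
  Finset.univ.filter (fun j => y j = -1)

/-!
A misranked pair `(p, q)` with `p ∈ S⁺`, `q ∈ S⁻` and `s p ≤ s q` carries a sign error at `p`
or at `q`, since otherwise `s p = 1 > -1 = s q`. By the union bound there are at most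
`|S⁻| · e⁺ + |S⁺| · e⁻` such pairs, where `e±` counts the errors on `S±`. Dividing by
`|S⁺| · |S⁻|` leaves `e⁺ / |S⁺| + e⁻ / |S⁻| ≤ (e⁺ + e⁻) / min |S⁺| |S⁻|`.
-/

section PairCount

variable {α β R : Type*} [Semiring R] [PartialOrder R] [IsOrderedRing R]

theorem sum_sum_ite_le_of_imp_or (A : Finset α) (B : Finset β) (r : α → β → Prop)
    (e : α → Prop) (f : β → Prop) [DecidableRel r] [DecidablePred e] [DecidablePred f]
    (h : ∀ p ∈ A, ∀ q ∈ B, r p q → e p ∨ f q) :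
    ∑ p ∈ A, ∑ q ∈ B, (if r p q then (1 : R) else 0) ≤
      B.card * ∑ p ∈ A, (if e p then (1 : R) else 0) +
        A.card * ∑ q ∈ B, (if f q then (1 : R) else 0) := by
  have hpair : ∀ p ∈ A, ∀ q ∈ B,
      (if r p q then (1 : R) else 0) ≤ (if e p then 1 else 0) + (if f q then 1 else 0) := by
    intro p hp q hq
    have := h p hp q hq
    split_ifs <;> simp_all [le_add_of_nonneg_right, add_nonneg]
  calc ∑ p ∈ A, ∑ q ∈ B, (if r p q then (1 : R) else 0)
      ≤ ∑ p ∈ A, ∑ q ∈ B, ((if e p then (1 : R) else 0) + (if f q then 1 else 0)) :=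
        Finset.sum_le_sum fun p hp => Finset.sum_le_sum fun q hq => hpair p hp q hq
    _ = _ := by
        simp only [Finset.sum_add_distrib, Finset.sum_const, nsmul_eq_mul, Finset.mul_sum]

end PairCount

theorem div_add_div_le_add_div_min {K : Type*} [Field K] [LinearOrder K] [IsStrictOrderedRing K]
    {a b m n : K} (ha : 0 ≤ a) (hb : 0 ≤ b) (hm : 0 < m) (hn : 0 < n) :
    a / m + b / n ≤ (a + b) / min m n := by
  rw [add_div]
  gcongr
  exacts [min_le_left m n, min_le_right m n]

theorem disjoint_Sp_Sm {c : ℕ} (y : Fin c → ℝ) : Disjoint (Sp y) (Sm y) := by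
  rw [Sp, Sm, Finset.disjoint_filter]
  intro j _ h1 hm
  norm_num [h1] at hm

theorem error_of_misranked {c : ℕ} {y s : Fin c → ℝ} {p q : Fin c} (hp : p ∈ Sp y)
    (hq : q ∈ Sm y) (hpq : s p ≤ s q) : s p ≠ y p ∨ s q ≠ y q := by
  simp only [Sp, Sm, Finset.mem_filter, Finset.mem_univ, true_and] at hp hq
  by_contra! h
  linarith

theorem sum_Sp_add_sum_Sm_le {c : ℕ} (y : Fin c → ℝ) (g : Fin c → ℝ) (hg : ∀ j, 0 ≤ g j) :
    ∑ j ∈ Sp y, g j + ∑ j ∈ Sm y, g j ≤ ∑ j, g j := by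
  rw [← Finset.sum_union (disjoint_Sp_Sm y)]
  exact Finset.sum_le_univ_sum_of_nonneg hg

theorem stmt19_general (c : ℕ)
    (y : Fin c → ℝ)
    (hyp : (Sp y).Nonempty) (hym : (Sm y).Nonempty)
    (s : Fin c → ℝ) :
    (1 / (((Sp y).card : ℝ) * ((Sm y).card : ℝ))) *
        ∑ p ∈ Sp y, ∑ q ∈ Sm y, (if s p ≤ s q then (1 : ℝ) else 0) ≤
      (1 / ((min (Sp y).card (Sm y).card : ℕ) : ℝ)) *
        ∑ j, (if s j ≠ y j then (1 : ℝ) else 0) := by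
  set err : Fin c → ℝ := fun j => if s j ≠ y j then 1 else 0
  have hM : (0 : ℝ) < (Sp y).card := by exact_mod_cast hyp.card_pos
  have hN : (0 : ℝ) < (Sm y).card := by exact_mod_cast hym.card_pos
  have herr : ∀ j, 0 ≤ err j := fun j => by positivity
  calc (1 / (((Sp y).card : ℝ) * (Sm y).card)) *
        ∑ p ∈ Sp y, ∑ q ∈ Sm y, (if s p ≤ s q then (1 : ℝ) else 0)
      ≤ (1 / (((Sp y).card : ℝ) * (Sm y).card)) *
          ((Sm y).card * ∑ p ∈ Sp y, err p + (Sp y).card * ∑ q ∈ Sm y, err q) := by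
        gcongr
        exact sum_sum_ite_le_of_imp_or _ _ _ _ _ fun p hp q hq => error_of_misranked hp hq
    _ = (∑ p ∈ Sp y, err p) / (Sp y).card + (∑ q ∈ Sm y, err q) / (Sm y).card := by
        field_simp
    _ ≤ (∑ p ∈ Sp y, err p + ∑ q ∈ Sm y, err q) / min ((Sp y).card : ℝ) (Sm y).card :=
        div_add_div_le_add_div_min (Finset.sum_nonneg fun j _ => herr j)
          (Finset.sum_nonneg fun j _ => herr j) hM hN
    _ ≤ (1 / ((min (Sp y).card (Sm y).card : ℕ) : ℝ)) * ∑ j, err j := by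
        rw [Nat.cast_min, one_div_mul_eq_div]
        gcongr
        exact sum_Sp_add_sum_Sm_le y err herr

theorem stmt19 (c : ℕ) (hc : 2 ≤ c)
    (y : Fin c → ℝ) (hy : ∀ j, y j = 1 ∨ y j = -1)
    (hyp : (Sp y).Nonempty) (hym : (Sm y).Nonempty)
    (s : Fin c → ℝ) (hs : ∀ j, s j = 1 ∨ s j = -1) :
    (1 / (((Sp y).card : ℝ) * ((Sm y).card : ℝ))) *
        ∑ p ∈ Sp y, ∑ q ∈ Sm y, (if s p ≤ s q then (1 : ℝ) else 0) ≤
      (1 / ((min (Sp y).card (Sm y).card : ℕ) : ℝ)) *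
        ∑ j, (if s j ≠ y j then (1 : ℝ) else 0) :=
  stmt19_general c y hyp hym s
end
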